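/- arXiv:1711.03493 — 7 statements merged into one kernel-verified Lean document; each statement's English description precedes it below -/
import Mathlib

section
/- For every n ∈ ℕ and positive reals x_1,...,x_n: (1/n) ∑_{k=1}^n (x_1 x_2 ⋯ x_k)^{1/k} ≤ ∏_{k=1}^n ((x_1+⋯+x_k)/k)^{1/n}. -/
/-!
Induction on `n`. Write `A k` for the `k`-th partial arithmetic mean and, at the step to `n + 1`,
put `v k = (n + 1 - k) A k + (k - 1) A (k - 1)`, so that `v k + x k = (n + 1) A k` because
`k A k = (k - 1) A (k - 1) + x k`. Two-point weighted AM-GM on each `v k`, followed by a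
telescoping of the exponents, gives `n · GM(A 1, …, A n) ≤ GM(v 1, …, v (n + 1))`. Adding the
new partial geometric mean `GM(x 1, …, x (n + 1))` to the induction hypothesis and using the
superadditivity of the geometric mean, `GM(v) + GM(x) ≤ GM(v + x) = (n + 1) · GM(A)`, closes the
step.
-/

open Finset

namespace Real

variable {ι : Type*} {s : Finset ι}

theorem prod_rpow_add_prod_rpow_le {w u v : ι → ℝ} (hw : ∀ i ∈ s, 0 ≤ w i)
    (hw₁ : ∑ i ∈ s, w i = 1) (hu : ∀ i ∈ s, 0 ≤ u i) (hv : ∀ i ∈ s, 0 ≤ v i)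
    (huv : ∀ i ∈ s, 0 < u i + v i) :
    ∏ i ∈ s, u i ^ w i + ∏ i ∈ s, v i ^ w i ≤ ∏ i ∈ s, (u i + v i) ^ w i := by
  have hP : 0 < ∏ i ∈ s, (u i + v i) ^ w i :=
    prod_pos fun i hi => rpow_pos_of_pos (huv i hi) _
  have key : ∀ f : ι → ℝ, (∀ i ∈ s, 0 ≤ f i) →
      (∏ i ∈ s, f i ^ w i) / ∏ i ∈ s, (u i + v i) ^ w i
        ≤ ∑ i ∈ s, w i * (f i / (u i + v i)) := by
    intro f hf
    rw [← prod_div_distrib,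
      ← prod_congr rfl fun i hi => div_rpow (hf i hi) (huv i hi).le (w i)]
    exact geom_mean_le_arith_mean_weighted s w _ hw hw₁
      fun i hi => div_nonneg (hf i hi) (huv i hi).le
  have hsum :
      ∑ i ∈ s, w i * (u i / (u i + v i)) + ∑ i ∈ s, w i * (v i / (u i + v i)) = 1 := by
    rw [← sum_add_distrib, ← hw₁]
    refine sum_congr rfl fun i hi => ?_
    rw [← mul_add, ← add_div, div_self (huv i hi).ne', mul_one]
  rw [← div_le_one hP, add_div]
  linarith [key u hu, key v hv]

theorem prod_const_mul_rpow_one_div {N : ℕ} (hs : #s = N) (hN : N ≠ 0) {c : ℝ} (hc : 0 ≤ c)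
    {f : ι → ℝ} (hf : ∀ i ∈ s, 0 ≤ f i) :
    ∏ i ∈ s, (c * f i) ^ ((1 : ℝ) / N) = c * ∏ i ∈ s, f i ^ ((1 : ℝ) / N) := by
  rw [prod_congr rfl fun i hi => mul_rpow hc (hf i hi), prod_mul_distrib, prod_const, hs,
    one_div, rpow_inv_natCast_pow hc hN]

theorem natCast_mul_rpow_mul_rpow_le {i j n : ℕ} (hij : i + j = n) (hn : 0 < n) {a b : ℝ}
    (ha : 0 ≤ a) (hb : 0 ≤ b) :
    (n : ℝ) * (a ^ ((i : ℝ) / n) * b ^ ((j : ℝ) / n)) ≤ i * a + j * b := by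
  have hn' : (0 : ℝ) < n := by exact_mod_cast hn
  have hw : (i : ℝ) / n + (j : ℝ) / n = 1 := by
    rw [← add_div, div_eq_one_iff_eq hn'.ne']
    exact_mod_cast hij
  calc (n : ℝ) * (a ^ ((i : ℝ) / n) * b ^ ((j : ℝ) / n))
      ≤ n * ((i : ℝ) / n * a + (j : ℝ) / n * b) := by
        gcongr
        exact geom_mean_le_arith_mean2_weighted (by positivity) (by positivity) ha hb hw
    _ = i * a + j * b := by field_simp

end Real

namespace Finset

variable {M : Type*} [CommMonoid M]

theorem prod_Icc_one_succ_comp_sub_one (g : ℕ → M) (n : ℕ) :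
    ∏ k ∈ Icc 1 (n + 1), g (k - 1) = g 0 * ∏ k ∈ Icc 1 n, g k := by
  induction n with
  | zero => simp
  | succ n ih =>
    rw [prod_Icc_succ_top (by omega), ih, prod_Icc_succ_top (by omega), mul_assoc]
    rfl

theorem prod_Icc_mul_comp_sub_one {f g : ℕ → M} {n : ℕ} (hf : f (n + 1) = 1) (hg : g 0 = 1) :
    ∏ k ∈ Icc 1 (n + 1), f k * g (k - 1) = ∏ k ∈ Icc 1 n, f k * g k := by
  rw [prod_mul_distrib, prod_mul_distrib, prod_Icc_succ_top (by omega), hf,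
    prod_Icc_one_succ_comp_sub_one, hg, mul_one, one_mul]

end Finset

open Real in
theorem mul_prod_rpow_le_prod_interpolate_rpow {n : ℕ} (hn : 0 < n) {a : ℕ → ℝ}
    (ha : ∀ k ≤ n + 1, 0 ≤ a k) :
    n * ∏ k ∈ Icc 1 n, a k ^ ((1 : ℝ) / n)
      ≤ ∏ k ∈ Icc 1 (n + 1),
          (((n + 1 - k : ℕ) : ℝ) * a k + ((k - 1 : ℕ) : ℝ) * a (k - 1))
            ^ ((1 : ℝ) / (n + 1 : ℕ)) := by
  set e : ℝ := (1 : ℝ) / (n + 1 : ℕ)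
  have ha' : ∀ k ∈ Icc 1 (n + 1), 0 ≤ a k ∧ 0 ≤ a (k - 1) := fun k hk =>
    ⟨ha k (mem_Icc.1 hk).2, ha (k - 1) (by have := (mem_Icc.1 hk).2; omega)⟩
  have hgeom : ∀ k ∈ Icc 1 (n + 1),
      0 ≤ a k ^ (((n + 1 - k : ℕ) : ℝ) / n) * a (k - 1) ^ (((k - 1 : ℕ) : ℝ) / n) := by
    intro k hk
    obtain ⟨hak, hak'⟩ := ha' k hk
    positivity
  have hexp : ∀ k ∈ Icc 1 n,
      ((n + 1 - k : ℕ) : ℝ) / n * e + (k : ℝ) / n * e = 1 / n := by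
    intro k hk
    rw [Nat.cast_sub (by have := (mem_Icc.1 hk).2; omega)]
    push_cast [e]
    field_simp
    ring
  have hshift : ∏ k ∈ Icc 1 (n + 1),
        (a k ^ (((n + 1 - k : ℕ) : ℝ) / n) * a (k - 1) ^ (((k - 1 : ℕ) : ℝ) / n)) ^ e
      = ∏ k ∈ Icc 1 n, a k ^ ((1 : ℝ) / n) := by
    rw [prod_congr rfl fun k hk => by
      obtain ⟨hak, hak'⟩ := ha' k hk
      rw [mul_rpow (rpow_nonneg hak _) (rpow_nonneg hak' _), ← rpow_mul hak, ← rpow_mul hak']]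
    rw [prod_Icc_mul_comp_sub_one (g := fun j => a j ^ ((j : ℝ) / n * e)) (by simp) (by simp)]
    refine prod_congr rfl fun k hk => ?_
    rw [← rpow_add' (ha k (by have := (mem_Icc.1 hk).2; omega)) (by rw [hexp k hk]; positivity),
      hexp k hk]
  calc (n : ℝ) * ∏ k ∈ Icc 1 n, a k ^ ((1 : ℝ) / n)
      = ∏ k ∈ Icc 1 (n + 1),
          (n * (a k ^ (((n + 1 - k : ℕ) : ℝ) / n) * a (k - 1) ^ (((k - 1 : ℕ) : ℝ) / n)))
            ^ e := by
        rw [prod_const_mul_rpow_one_div (by simp) (by omega) (Nat.cast_nonneg n) hgeom, hshift]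
    _ ≤ _ := by
        have hfac := fun k hk => mul_nonneg (Nat.cast_nonneg n) (hgeom k hk)
        refine prod_le_prod (fun k hk => rpow_nonneg (hfac k hk) e) fun k hk => ?_
        obtain ⟨hk1, hk2⟩ := mem_Icc.1 hk
        exact rpow_le_rpow (hfac k hk)
          (natCast_mul_rpow_mul_rpow_le (by omega) hn (ha' k hk).1 (ha' k hk).2) (by positivity)

noncomputable def partialMean (x : ℕ → ℝ) (k : ℕ) : ℝ := (∑ i ∈ Icc 1 k, x i) / k

theorem natCast_mul_partialMean (x : ℕ → ℝ) (k : ℕ) :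
    (k : ℝ) * partialMean x k = ∑ i ∈ Icc 1 k, x i :=
  mul_div_cancel_of_imp' fun hk => by simp [Nat.cast_eq_zero.1 hk]

theorem partialMean_nonneg {x : ℕ → ℝ} {n k : ℕ} (hx : ∀ i ∈ Icc 1 n, 0 ≤ x i)
    (hk : k ≤ n) :
    0 ≤ partialMean x k :=
  div_nonneg (sum_nonneg fun i hi => hx i (by grind)) k.cast_nonneg

theorem natCast_sub_mul_partialMean_add (x : ℕ → ℝ) {n k : ℕ} (hk : k ∈ Icc 1 (n + 1)) :
    ((n + 1 - k : ℕ) : ℝ) * partialMean x k + ((k - 1 : ℕ) : ℝ) * partialMean x (k - 1)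
      + x k = (n + 1 : ℕ) * partialMean x k := by
  obtain ⟨j, rfl⟩ : ∃ j, k = j + 1 := ⟨k - 1, by grind⟩
  have hrec := natCast_mul_partialMean x (j + 1)
  rw [sum_Icc_succ_top (by omega), ← natCast_mul_partialMean] at hrec
  rw [Nat.add_sub_cancel, Nat.cast_sub (by grind)]
  push_cast at hrec ⊢
  linear_combination -hrec

open Real in
theorem sum_partial_geom_mean_le (x : ℕ → ℝ) (n : ℕ) (hx : ∀ i ∈ Icc 1 n, 0 < x i) :
    ∑ k ∈ Icc 1 n, (∏ i ∈ Icc 1 k, x i) ^ ((1 : ℝ) / k)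
      ≤ n * ∏ k ∈ Icc 1 n, partialMean x k ^ ((1 : ℝ) / n) := by
  induction n with
  | zero => simp
  | succ n ih =>
    rcases n.eq_zero_or_pos with rfl | hn
    · simp [partialMean]
    set v : ℕ → ℝ := fun k =>
      ((n + 1 - k : ℕ) : ℝ) * partialMean x k + ((k - 1 : ℕ) : ℝ) * partialMean x (k - 1)
    have hA : ∀ k ≤ n + 1, 0 ≤ partialMean x k := fun k =>
      partialMean_nonneg fun i hi => (hx i hi).le
    have hv : ∀ k ∈ Icc 1 (n + 1), 0 ≤ v k := fun k hk =>
      add_nonneg (mul_nonneg (Nat.cast_nonneg _) (hA k (mem_Icc.1 hk).2))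
        (mul_nonneg (Nat.cast_nonneg _) (hA (k - 1) (by grind)))
    calc ∑ k ∈ Icc 1 (n + 1), (∏ i ∈ Icc 1 k, x i) ^ ((1 : ℝ) / k)
        = ∑ k ∈ Icc 1 n, (∏ i ∈ Icc 1 k, x i) ^ ((1 : ℝ) / k)
            + ∏ k ∈ Icc 1 (n + 1), x k ^ ((1 : ℝ) / (n + 1 : ℕ)) := by
          rw [sum_Icc_succ_top (by omega), finsetProd_rpow _ _ fun i hi => (hx i hi).le]
      _ ≤ n * ∏ k ∈ Icc 1 n, partialMean x k ^ ((1 : ℝ) / n)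
            + ∏ k ∈ Icc 1 (n + 1), x k ^ ((1 : ℝ) / (n + 1 : ℕ)) := by
          gcongr
          exact ih fun i hi => hx i (by grind)
      _ ≤ ∏ k ∈ Icc 1 (n + 1), v k ^ ((1 : ℝ) / (n + 1 : ℕ))
            + ∏ k ∈ Icc 1 (n + 1), x k ^ ((1 : ℝ) / (n + 1 : ℕ)) := by
          gcongr
          exact mul_prod_rpow_le_prod_interpolate_rpow hn hA
      _ ≤ ∏ k ∈ Icc 1 (n + 1), (v k + x k) ^ ((1 : ℝ) / (n + 1 : ℕ)) :=
          prod_rpow_add_prod_rpow_le (fun _ _ => by positivity)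
            (by simp [Nat.cast_add_one_ne_zero]) hv (fun i hi => (hx i hi).le)
            fun i hi => add_pos_of_nonneg_of_pos (hv i hi) (hx i hi)
      _ = (n + 1 : ℕ)
            * ∏ k ∈ Icc 1 (n + 1), partialMean x k ^ ((1 : ℝ) / (n + 1 : ℕ)) := by
          rw [prod_congr rfl fun k hk => by rw [natCast_sub_mul_partialMean_add x hk]]
          exact prod_const_mul_rpow_one_div (by simp) (by omega) (Nat.cast_nonneg _)
            fun k hk => hA k (mem_Icc.1 hk).2

theorem kedlaya_inequality_general
    (n : ℕ) (x : ℕ → ℝ) (hx : ∀ i ∈ Icc 1 n, 0 < x i) :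
    (1 / (n : ℝ)) * ∑ k ∈ Icc 1 n, (∏ i ∈ Icc 1 k, x i) ^ ((1 : ℝ) / k)
      ≤ ∏ k ∈ Icc 1 n, ((∑ i ∈ Icc 1 k, x i) / k) ^ ((1 : ℝ) / n) := by
  rcases n.eq_zero_or_pos with rfl | hn
  · simp
  rw [one_div_mul_eq_div, div_le_iff₀ (by exact_mod_cast hn), mul_comm]
  exact sum_partial_geom_mean_le x n hx

/-- The unweighted Kedlaya inequality: the arithmetic mean of the partial
geometric means is at most the geometric mean of the partial arithmetic means. -/
theorem kedlaya_inequality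
    (n : ℕ) (hn : 1 ≤ n) (x : ℕ → ℝ) (hx : ∀ i ∈ Icc 1 n, 0 < x i) :
    (1 / (n : ℝ)) * ∑ k ∈ Icc 1 n, (∏ i ∈ Icc 1 k, x i) ^ ((1 : ℝ) / k)
      ≤ ∏ k ∈ Icc 1 n, ((∑ i ∈ Icc 1 k, x i) / k) ^ ((1 : ℝ) / n) :=
  kedlaya_inequality_general n x hx
end

section
/- Let I ⊆ ℝ be an interval and let M : ⋃_n I^n × W_n(ℝ) → I be a weighted mean (nullhomogeneous in weights, satisfying the reduction principle, the mean value property, and the elimination principle). Then for every n, every k ∈ {1,...,n}, x ∈ I^n, λ ∈ W_n(ℝ) and nonnegative λ_k' ∈ ℝ: M((x_1,...,x_{k-1},x_k,x_k,x_{k+1},...,x_n),(λ_1,...,λ_{k-1},λ_k,λ_k',λ_{k+1},...,λ_n)) = M((x_1,...,x_n),(λ_1,...,λ_{k-1},λ_k+λ_k',λ_{k+1},...,λ_n)). -/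
/-!
If `λₖ' = 0` the claim is one instance of the elimination principle. Otherwise apply the reduction
principle to `λ` and `μ = λₖ' eₖ`: as `λ + μ` carries `λₖ + λₖ'` at position `k`, it turns the
right-hand side into the mean of `x` shuffled with itself, weighted by `λ` shuffled with `μ`. Away
from position `k` every second weight of that shuffle is `0`, and deleting these entries one by one
with the elimination principle leaves exactly the left-hand side.
-/

/-- A weight vector: all entries nonnegative with positive sum. -/
def IsWeightVec (lam : List ℝ) : Prop := (∀ w ∈ lam, 0 ≤ w) ∧ 0 < lam.sum

/-- The shuffle (interleaving) of two lists of equal length. -/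
def shuffle {α : Type*} (a b : List α) : List α :=
  (List.zipWith (fun p q => [p, q]) a b).flatten

open List

section Shuffle

variable {α : Type*}

@[simp]
theorem shuffle_cons (a b : α) (v w : List α) :
    shuffle (a :: v) (b :: w) = a :: b :: shuffle v w := rfl

theorem shuffle_append {a b : List α} (c d : List α) (h : a.length = b.length) :
    shuffle (a ++ c) (b ++ d) = shuffle a b ++ shuffle c d := by
  rw [shuffle, zipWith_append h, flatten_append, ← shuffle, ← shuffle]

theorem perm_shuffle : ∀ {v w : List α}, v.length = w.length → shuffle v w ~ v ++ w
  | [], [], _ => .rfl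
  | a :: v, b :: w, h => by
    rw [shuffle_cons, cons_append]
    exact ((perm_shuffle (by simpa using h)).cons b |>.trans perm_middle.symm).cons a

@[simp]
theorem mem_shuffle_self {v : List α} {c : α} : c ∈ shuffle v v ↔ c ∈ v := by
  simp [(perm_shuffle rfl).mem_iff]

end Shuffle

theorem zipWith_add_replicate_zero {β : Type*} [AddZeroClass β] (l : List β) :
    zipWith (· + ·) l (replicate l.length 0) = l := by
  induction l with
  | nil => rfl
  | cons a l ih => simp [replicate_succ, ih]

theorem IsWeightVec.append_cons (l₁ l₂ : List ℝ) {c : ℝ} (h : IsWeightVec (l₁ ++ l₂))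
    (hc : 0 ≤ c) : IsWeightVec (l₁ ++ c :: l₂) := by
  simp_all [IsWeightVec, or_imp, forall_and]
  linarith

theorem isWeightVec_shuffle_replicate_zero_append {w l : List ℝ} :
    IsWeightVec (shuffle w (replicate w.length 0) ++ l) ↔ IsWeightVec (w ++ l) := by
  have hp := perm_shuffle (v := w) (w := replicate w.length 0) (by simp)
  simp [IsWeightVec, hp.mem_iff, hp.sum_eq, or_imp, forall_and]

def EliminatesZeroWeights (I : Set ℝ) (M : List ℝ → List ℝ → ℝ) : Prop :=
  ∀ (x₁ x₂ lam₁ lam₂ : List ℝ) (a : ℝ),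
    x₁.length = lam₁.length → x₂.length = lam₂.length →
    (∀ b ∈ x₁ ++ a :: x₂, b ∈ I) → IsWeightVec (lam₁ ++ 0 :: lam₂) →
    M (x₁ ++ a :: x₂) (lam₁ ++ 0 :: lam₂) = M (x₁ ++ x₂) (lam₁ ++ lam₂)

theorem EliminatesZeroWeights.shuffle_self_replicate_zero {I : Set ℝ}
    {M : List ℝ → List ℝ → ℝ} (hM : EliminatesZeroWeights I M) :
    ∀ {v w : List ℝ} (p pl q ql : List ℝ), v.length = w.length →
      p.length = pl.length → q.length = ql.length →
      (∀ b ∈ p ++ v ++ q, b ∈ I) → IsWeightVec (pl ++ w ++ ql) →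
      M (p ++ shuffle v v ++ q) (pl ++ shuffle w (replicate w.length 0) ++ ql)
        = M (p ++ v ++ q) (pl ++ w ++ ql)
  | [], [], _, _, _, _, _, _, _, _, _ => rfl
  | a :: v, b :: w, p, pl, q, ql, hvw, hp, hq, hI, hw => by
    have hvw : v.length = w.length := by simpa using hvw
    have hI' : ∀ c ∈ (p ++ [a]) ++ a :: (v ++ q), c ∈ I := by
      simp_all [or_imp, forall_and]
    have hw' : IsWeightVec ((pl ++ [b]) ++ 0 :: (w ++ ql)) :=
      .append_cons (pl ++ [b]) (w ++ ql) (by simpa using hw) le_rfl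
    calc M (p ++ shuffle (a :: v) (a :: v) ++ q)
          (pl ++ shuffle (b :: w) (replicate (b :: w).length 0) ++ ql)
        = M ((p ++ [a, a]) ++ shuffle v v ++ q)
            ((pl ++ [b, 0]) ++ shuffle w (replicate w.length 0) ++ ql) := by
          simp [replicate_succ]
      _ = M ((p ++ [a]) ++ a :: (v ++ q)) ((pl ++ [b]) ++ 0 :: (w ++ ql)) := by
          rw [shuffle_self_replicate_zero hM _ _ _ _ hvw (by simp [hp]) hq
            (by simpa using hI') (by simpa using hw')]
          simp
      _ = M (p ++ (a :: v) ++ q) (pl ++ (b :: w) ++ ql) := by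
          rw [hM _ _ _ _ a (by simp [hp]) (by simp [hvw, hq]) hI' hw']
          simp

theorem weighted_mean_merge_repeated_entry_general
    (I : Set ℝ) (M : List ℝ → List ℝ → ℝ)
    -- reduction principle
    (hred : ∀ (x lam mu : List ℝ), x.length = lam.length → x.length = mu.length →
      (∀ a ∈ x, a ∈ I) → IsWeightVec lam → IsWeightVec mu →
      M x (List.zipWith (· + ·) lam mu) = M (shuffle x x) (shuffle lam mu))
    -- elimination principle: an entry with zero weight can be omitted
    (helim : ∀ (x₁ x₂ lam₁ lam₂ : List ℝ) (a : ℝ),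
      x₁.length = lam₁.length → x₂.length = lam₂.length →
      (∀ b ∈ x₁ ++ a :: x₂, b ∈ I) → IsWeightVec (lam₁ ++ 0 :: lam₂) →
      M (x₁ ++ a :: x₂) (lam₁ ++ 0 :: lam₂) = M (x₁ ++ x₂) (lam₁ ++ lam₂)) :
    ∀ (x₁ x₂ lam₁ lam₂ : List ℝ) (a lk lk' : ℝ),
      x₁.length = lam₁.length → x₂.length = lam₂.length →
      (∀ b ∈ x₁ ++ a :: x₂, b ∈ I) → 0 ≤ lk' →
      IsWeightVec (lam₁ ++ lk :: lam₂) →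
      M (x₁ ++ a :: a :: x₂) (lam₁ ++ lk :: lk' :: lam₂)
        = M (x₁ ++ a :: x₂) (lam₁ ++ (lk + lk') :: lam₂) := by
  have hM : EliminatesZeroWeights I M := helim
  intro x₁ x₂ lam₁ lam₂ a lk lk' h₁ h₂ hI hlk' hlam
  rcases hlk'.eq_or_lt with rfl | hpos
  · simpa using hM (x₁ ++ [a]) x₂ (lam₁ ++ [lk]) lam₂ a (by simp [h₁]) h₂
      (by simpa using hI) (.append_cons _ _ (by simpa using hlam) le_rfl)
  set μ := replicate lam₁.length 0 ++ lk' :: replicate lam₂.length (0 : ℝ)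
  have hμ : IsWeightVec μ := by simp [μ, IsWeightVec, or_imp, forall_and, hlk', hpos]
  have hsum : zipWith (· + ·) (lam₁ ++ lk :: lam₂) μ = lam₁ ++ (lk + lk') :: lam₂ := by
    simp [μ, zipWith_append, zipWith_add_replicate_zero]
  have hlam' : IsWeightVec (lam₁ ++ lk :: lk' :: lam₂) := by
    simpa using IsWeightVec.append_cons (lam₁ ++ [lk]) lam₂ (by simpa using hlam) hlk'
  calc M (x₁ ++ a :: a :: x₂) (lam₁ ++ lk :: lk' :: lam₂)
      = M (shuffle x₁ x₁ ++ a :: a :: x₂)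
          (shuffle lam₁ (replicate lam₁.length 0) ++ lk :: lk' :: lam₂) := by
        simpa using (hM.shuffle_self_replicate_zero [] [] (a :: a :: x₂) (lk :: lk' :: lam₂)
          h₁ rfl (by simp [h₂]) (by simpa using hI) (by simpa using hlam')).symm
    _ = M (shuffle x₁ x₁ ++ a :: a :: shuffle x₂ x₂)
          (shuffle lam₁ (replicate lam₁.length 0) ++ lk :: lk' ::
            shuffle lam₂ (replicate lam₂.length 0)) := by
        simpa using (hM.shuffle_self_replicate_zero (shuffle x₁ x₁ ++ [a, a])
          (shuffle lam₁ (replicate lam₁.length 0) ++ [lk, lk']) [] [] h₂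
          (by simp [(perm_shuffle rfl).length_eq,
            (perm_shuffle (length_replicate ..).symm).length_eq, h₁])
          rfl (by simpa using hI)
          (by simpa [isWeightVec_shuffle_replicate_zero_append] using hlam')).symm
    _ = M (shuffle (x₁ ++ a :: x₂) (x₁ ++ a :: x₂)) (shuffle (lam₁ ++ lk :: lam₂) μ) := by
        rw [shuffle_append _ _ rfl, shuffle_append _ _ (length_replicate ..).symm]
        rfl
    _ = M (x₁ ++ a :: x₂) (lam₁ ++ (lk + lk') :: lam₂) := by
        rw [← hred _ _ _ (by simp [h₁, h₂]) (by simp [μ, h₁, h₂]) hI hlam hμ, hsum]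

/-- Lemma 1 (equiv_red): for any weighted mean `M` on an interval `I`
(nullhomogeneous in the weights, satisfying the reduction principle, the mean
value property, and the elimination principle), a repeated entry with weights
`λₖ, λₖ'` can be merged into a single entry with weight `λₖ + λₖ'`. -/
theorem weighted_mean_merge_repeated_entry
    (I : Set ℝ) (M : List ℝ → List ℝ → ℝ)
    -- nullhomogeneity in the weights
    (hhom : ∀ (x lam : List ℝ) (t : ℝ), 0 < t → x.length = lam.length →
      (∀ a ∈ x, a ∈ I) → IsWeightVec lam → M x (lam.map (fun w => t * w)) = M x lam)
    -- reduction principle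
    (hred : ∀ (x lam mu : List ℝ), x.length = lam.length → x.length = mu.length →
      (∀ a ∈ x, a ∈ I) → IsWeightVec lam → IsWeightVec mu →
      M x (List.zipWith (· + ·) lam mu) = M (shuffle x x) (shuffle lam mu))
    -- mean value property
    (hmean : ∀ (x lam : List ℝ), x ≠ [] → x.length = lam.length →
      (∀ a ∈ x, a ∈ I) → IsWeightVec lam →
      (∃ a ∈ x, a ≤ M x lam) ∧ (∃ a ∈ x, M x lam ≤ a))
    -- elimination principle: an entry with zero weight can be omitted
    (helim : ∀ (x₁ x₂ lam₁ lam₂ : List ℝ) (a : ℝ),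
      x₁.length = lam₁.length → x₂.length = lam₂.length →
      (∀ b ∈ x₁ ++ a :: x₂, b ∈ I) → IsWeightVec (lam₁ ++ 0 :: lam₂) →
      M (x₁ ++ a :: x₂) (lam₁ ++ 0 :: lam₂) = M (x₁ ++ x₂) (lam₁ ++ lam₂)) :
    ∀ (x₁ x₂ lam₁ lam₂ : List ℝ) (a lk lk' : ℝ),
      x₁.length = lam₁.length → x₂.length = lam₂.length →
      (∀ b ∈ x₁ ++ a :: x₂, b ∈ I) → 0 ≤ lk' →
      IsWeightVec (lam₁ ++ lk :: lam₂) →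
      M (x₁ ++ a :: a :: x₂) (lam₁ ++ lk :: lk' :: lam₂)
        = M (x₁ ++ a :: x₂) (lam₁ ++ (lk + lk') :: lam₂) :=
  weighted_mean_merge_repeated_entry_general I M hred helim
end

section
/- Define M(x,λ) := (∑ λ_i x_i²)/(∑ λ_i x_i) when ∑ λ_i x_i > 0 and M(x,λ) := 0 otherwise, for x ∈ [0,∞)^n and nonnegative weights λ with positive sum. Then M is Jensen convex in x: for all x, y ∈ [0,∞)^n, M((x+y)/2, λ) ≤ (M(x,λ) + M(y,λ))/2. -/
open Finset

/-- The weighted Gini mean `G_{2,1}` (contraharmonic type), extended by `0`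
when the denominator vanishes. -/
noncomputable def giniM {n : ℕ} (x lam : Fin n → ℝ) : ℝ :=
  if 0 < ∑ i, lam i * x i then (∑ i, lam i * x i ^ 2) / (∑ i, lam i * x i) else 0

/-- The mean `G_{2,1}` is Jensen convex on `[0,∞)ⁿ`. -/
theorem giniM_jensenConvex
    (n : ℕ) (x y lam : Fin n → ℝ)
    (hx : ∀ i, 0 ≤ x i) (hy : ∀ i, 0 ≤ y i)
    (hlam : ∀ i, 0 ≤ lam i) (hsum : 0 < ∑ i, lam i) :
    giniM (fun i => (x i + y i) / 2) lam ≤ (giniM x lam + giniM y lam) / 2 := by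
  set A := ∑ i, lam i * x i with hA
  set B := ∑ i, lam i * y i with hB
  set P := ∑ i, lam i * x i ^ 2 with hP
  set Q := ∑ i, lam i * y i ^ 2 with hQ
  set S := ∑ i, lam i * (x i * y i) with hS
  have hA0 : 0 ≤ A := Finset.sum_nonneg fun i _ => mul_nonneg (hlam i) (hx i)
  have hB0 : 0 ≤ B := Finset.sum_nonneg fun i _ => mul_nonneg (hlam i) (hy i)
  have hP0 : 0 ≤ P := Finset.sum_nonneg fun i _ => mul_nonneg (hlam i) (sq_nonneg _)
  have hQ0 : 0 ≤ Q := Finset.sum_nonneg fun i _ => mul_nonneg (hlam i) (sq_nonneg _)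
  have hmidden : (∑ i, lam i * ((x i + y i) / 2)) = (A + B) / 2 := by
    calc (∑ i, lam i * ((x i + y i) / 2))
        = ∑ i, (lam i * x i + lam i * y i) / 2 :=
          Finset.sum_congr rfl fun i _ => by ring
      _ = (∑ i, (lam i * x i + lam i * y i)) / 2 := by rw [Finset.sum_div]
      _ = (A + B) / 2 := by rw [Finset.sum_add_distrib]
  have hmidnum : (∑ i, lam i * ((x i + y i) / 2) ^ 2) = (P + 2 * S + Q) / 4 := by
    calc (∑ i, lam i * ((x i + y i) / 2) ^ 2)
        = ∑ i, (lam i * x i ^ 2 + 2 * (lam i * (x i * y i)) + lam i * y i ^ 2) / 4 :=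
          Finset.sum_congr rfl fun i _ => by ring
      _ = (∑ i, (lam i * x i ^ 2 + 2 * (lam i * (x i * y i)) + lam i * y i ^ 2)) / 4 := by
          rw [Finset.sum_div]
      _ = (P + 2 * S + Q) / 4 := by
          rw [Finset.sum_add_distrib, Finset.sum_add_distrib, ← Finset.mul_sum]
  have key : 2 * A * B * S ≤ B ^ 2 * P + A ^ 2 * Q := by
    have h0 : (0:ℝ) ≤ ∑ i, lam i * (B * x i - A * y i) ^ 2 :=
      Finset.sum_nonneg fun i _ => mul_nonneg (hlam i) (sq_nonneg _)
    have hexp : (∑ i, lam i * (B * x i - A * y i) ^ 2)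
        = B ^ 2 * P + A ^ 2 * Q - 2 * A * B * S := by
      calc (∑ i, lam i * (B * x i - A * y i) ^ 2)
          = ∑ i, (B ^ 2 * (lam i * x i ^ 2) + A ^ 2 * (lam i * y i ^ 2)
              - 2 * A * B * (lam i * (x i * y i))) :=
            Finset.sum_congr rfl fun i _ => by ring
        _ = B ^ 2 * P + A ^ 2 * Q - 2 * A * B * S := by
            rw [Finset.sum_sub_distrib, Finset.sum_add_distrib,
              ← Finset.mul_sum, ← Finset.mul_sum, ← Finset.mul_sum]
    linarith [hexp ▸ h0]
  have hgx' : giniM x lam = if 0 < A then P / A else 0 := rfl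
  have hgy' : giniM y lam = if 0 < B then Q / B else 0 := rfl
  have hmid : giniM (fun i => (x i + y i) / 2) lam
      = if 0 < (A + B) / 2 then ((P + 2 * S + Q) / 4) / ((A + B) / 2) else 0 := by
    simp only [giniM, hmidden, hmidnum]
  have hgx : 0 ≤ giniM x lam := by
    rw [hgx']; split
    · exact div_nonneg hP0 hA0
    · exact le_refl 0
  have hgy : 0 ≤ giniM y lam := by
    rw [hgy']; split
    · exact div_nonneg hQ0 hB0
    · exact le_refl 0
  by_cases hAB : 0 < (A + B) / 2
  · rw [hmid, if_pos hAB]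
    have hABne : A + B ≠ 0 := by linarith
    by_cases hApos : 0 < A
    · by_cases hBpos : 0 < B
      · rw [hgx', hgy', if_pos hApos, if_pos hBpos]
        have e1 : (P + 2 * S + Q) / 4 / ((A + B) / 2) = (P + 2 * S + Q) / (2 * (A + B)) := by
          field_simp; ring
        have e2 : (P / A + Q / B) / 2 = (B * P + A * Q) / (2 * (A * B)) := by
          field_simp
        rw [e1, e2, div_le_div_iff₀ (by positivity) (by positivity)]
        nlinarith [key]
      · have hBe : B = 0 := le_antisymm (not_lt.mp hBpos) hB0
        have hz : ∀ i ∈ Finset.univ, lam i * y i = 0 :=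
          (Finset.sum_eq_zero_iff_of_nonneg
            (fun i _ => mul_nonneg (hlam i) (hy i))).mp (by rw [← hB]; exact hBe)
        have hQe : Q = 0 := Finset.sum_eq_zero fun i _ => by
          have h := hz i (Finset.mem_univ i)
          have : lam i * y i ^ 2 = (lam i * y i) * y i := by ring
          rw [this, h, zero_mul]
        have hSe : S = 0 := Finset.sum_eq_zero fun i _ => by
          have h := hz i (Finset.mem_univ i)
          have : lam i * (x i * y i) = (lam i * y i) * x i := by ring
          rw [this, h, zero_mul]
        rw [hgx', hgy', if_pos hApos, if_neg hBpos, hBe, hQe, hSe]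
        have : (P + 2 * 0 + 0) / 4 / ((A + 0) / 2) = (P / A + 0) / 2 := by
          field_simp; ring
        rw [this]
    · have hAe : A = 0 := le_antisymm (not_lt.mp hApos) hA0
      have hBpos : 0 < B := by
        rcases lt_or_eq_of_le hB0 with h | h
        · exact h
        · exfalso; rw [hAe, ← h] at hAB; norm_num at hAB
      have hz : ∀ i ∈ Finset.univ, lam i * x i = 0 :=
        (Finset.sum_eq_zero_iff_of_nonneg
          (fun i _ => mul_nonneg (hlam i) (hx i))).mp (by rw [← hA]; exact hAe)
      have hPe : P = 0 := Finset.sum_eq_zero fun i _ => by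
        have h := hz i (Finset.mem_univ i)
        have : lam i * x i ^ 2 = (lam i * x i) * x i := by ring
        rw [this, h, zero_mul]
      have hSe : S = 0 := Finset.sum_eq_zero fun i _ => by
        have h := hz i (Finset.mem_univ i)
        have : lam i * (x i * y i) = (lam i * x i) * y i := by ring
        rw [this, h, zero_mul]
      rw [hgx', hgy', if_neg hApos, if_pos hBpos, hAe, hPe, hSe]
      have : (0 + 2 * 0 + Q) / 4 / ((0 + B) / 2) = (0 + Q / B) / 2 := by
        field_simp; ring
      rw [this]
  · rw [hmid, if_neg hAB]
    linarith
end

section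
/- Let E : I × I → ℝ be a deviation function (E(x,x) = 0, and t ↦ E(x,t) is continuous and strictly decreasing for each x ∈ I), let n ∈ ℕ, x ∈ I^n, and λ_1,...,λ_n ≥ 0 with ∑λ_i > 0. Then there exists a unique y ∈ [min x, max x] with ∑_{i=1}^n λ_i E(x_i, y) = 0. -/
open Finset

/-- The weighted deviation mean is well defined: for a deviation function `E`
on an interval `I` (vanishing on the diagonal, continuous and strictly
decreasing in the second variable) there is a unique `y ∈ [min x, max x]`
solving `∑ λᵢ E(xᵢ, y) = 0`. -/
theorem deviation_mean_exists_unique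
    (I : Set ℝ) (hI : Convex ℝ I) (E : ℝ → ℝ → ℝ)
    (hdiag : ∀ x ∈ I, E x x = 0)
    (hcont : ∀ x ∈ I, ContinuousOn (E x) I)
    (hanti : ∀ x ∈ I, StrictAntiOn (E x) I)
    (n : ℕ) (x : Fin (n + 1) → ℝ) (hx : ∀ i, x i ∈ I)
    (lam : Fin (n + 1) → ℝ) (hlam : ∀ i, 0 ≤ lam i) (hsum : 0 < ∑ i, lam i) :
    ∃! y, y ∈ Set.Icc (univ.inf' univ_nonempty x) (univ.sup' univ_nonempty x) ∧
      ∑ i, lam i * E (x i) y = 0 := by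
  set a := univ.inf' univ_nonempty x with ha
  set b := univ.sup' univ_nonempty x with hb
  obtain ⟨i0, -, hi0⟩ := exists_mem_eq_inf' univ_nonempty x
  obtain ⟨i1, -, hi1⟩ := exists_mem_eq_sup' univ_nonempty x
  have haI : a ∈ I := by rw [ha, hi0]; exact hx i0
  have hbI : b ∈ I := by rw [hb, hi1]; exact hx i1
  have hab : a ≤ b := le_trans (inf'_le _ (mem_univ i0)) (le_sup' _ (mem_univ i0))
  have hIcc : Set.Icc a b ⊆ I := hI.ordConnected.out haI hbI
  set f : ℝ → ℝ := fun y => ∑ i, lam i * E (x i) y with hf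
  -- f is strictly antitone on Icc a b
  have hfanti : StrictAntiOn f (Set.Icc a b) := by
    intro y hy z hz hyz
    obtain ⟨j, -, hj⟩ := exists_lt_of_sum_lt (f := fun _ => (0:ℝ)) (by simpa using hsum)
    apply sum_lt_sum
    · intro i _
      have := (hanti (x i) (hx i)).antitoneOn (hIcc hy) (hIcc hz) hyz.le
      exact mul_le_mul_of_nonneg_left this (hlam i)
    · exact ⟨j, mem_univ j, by
        have := hanti (x j) (hx j) (hIcc hy) (hIcc hz) hyz
        exact mul_lt_mul_of_pos_left this hj⟩
  have hfcont : ContinuousOn f (Set.Icc a b) := by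
    apply continuousOn_finset_sum
    intro i _
    exact (continuousOn_const.mul ((hcont (x i) (hx i)).mono hIcc))
  have hfa : 0 ≤ f a := by
    apply sum_nonneg
    intro i _
    apply mul_nonneg (hlam i)
    rcases eq_or_lt_of_le (inf'_le x (mem_univ i) : a ≤ x i) with h | h
    · rw [← h, hdiag a haI]
    · exact le_of_lt (by simpa [hdiag (x i) (hx i)] using hanti (x i) (hx i) haI (hx i) h)
  have hfb : f b ≤ 0 := by
    apply sum_nonpos
    intro i _
    rcases eq_or_lt_of_le (le_sup' x (mem_univ i) : x i ≤ b) with h | h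
    · rw [h, hdiag b hbI]; simp
    · have := hanti (x i) (hx i) (hx i) hbI h
      rw [hdiag (x i) (hx i)] at this
      exact mul_nonpos_of_nonneg_of_nonpos (hlam i) this.le
  have : (0:ℝ) ∈ f '' Set.Icc a b :=
    intermediate_value_Icc' hab hfcont ⟨hfb, hfa⟩
  obtain ⟨y, hy, hfy⟩ := this
  refine ⟨y, ⟨hy, hfy⟩, ?_⟩
  intro z ⟨hz, hfz⟩
  exact hfanti.injOn hz hy (hfz.trans hfy.symm)
end

section
/- Let f : I → ℝ be a twice continuously differentiable function on an open interval I with f' nowhere zero, f'' nowhere zero, and such that f'/f'' is convex and negative on I. Then the two-variable equal-weight quasi-arithmetic mean (x,y) ↦ f⁻¹((f(x)+f(y))/2) is Jensen concave on I², i.e., midpoint concave as a function of (x,y). -/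
/-!
Write `h = f' / f''` and `F = f' h = f' ^ 2 / f''`; replacing `f` by `-f` if necessary, `f' > 0`.
Along a segment `t ↦ (x + t p, y + t q)` the mean is `φ = f⁻¹ ∘ c` with
`c t = (f (x + t p) + f (y + t q)) / 2`, and `φ'' f'(φ) ^ 3 = c'' f'(φ) ^ 2 - c' ^ 2 f''(φ)`.
By Cauchy–Schwarz this is `≤ 0` as soon as `2 F(φ) ≤ F(x + t p) + F(y + t q)`, i.e. as soon
as `F` is midpoint convex as a function of the value of `f`. It is: measured against `f`, `F`
has right derivative `1 + h'₊`, which is monotone because `h` is convex, so `F` lies above each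
of its supporting lines `F w + (1 + h'₊ w) (f - f w)`.
-/

open Set Filter

theorem isMinOn_of_hasDerivWithinAt_Ici {S : Set ℝ} [hS : S.OrdConnected] {Φ Φ' : ℝ → ℝ}
    {w : ℝ} (hw : w ∈ S) (hΦ : ContinuousOn Φ S)
    (hΦ' : ∀ x ∈ S, HasDerivWithinAt Φ (Φ' x) (Ici x) x)
    (h_left : ∀ x ∈ S, x < w → Φ' x ≤ 0) (h_right : ∀ x ∈ S, w ≤ x → 0 ≤ Φ' x) :
    IsMinOn Φ S w := by
  intro t ht
  rcases le_total w t with hwt | htw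
  · have hsub : Icc w t ⊆ S := hS.out hw ht
    exact image_le_of_deriv_right_le_deriv_boundary (f' := fun _ => 0) continuousOn_const
      (fun x _ => hasDerivWithinAt_const x _ (Φ w)) le_rfl (hΦ.mono hsub)
      (fun x hx => hΦ' x (hsub (Ico_subset_Icc_self hx)))
      (fun x hx => h_right x (hsub (Ico_subset_Icc_self hx)) hx.1) (right_mem_Icc.2 hwt)
  · have hsub : Icc t w ⊆ S := hS.out ht hw
    exact image_le_of_deriv_right_le_deriv_boundary (B := fun _ => Φ t) (B' := fun _ => 0)
      (hΦ.mono hsub) (fun x hx => hΦ' x (hsub (Ico_subset_Icc_self hx))) le_rfl continuousOn_const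
      (fun x _ => hasDerivWithinAt_const x _ (Φ t))
      (fun x hx => h_left x (hsub (Ico_subset_Icc_self hx)) hx.2) (right_mem_Icc.2 htw)

section

variable {S : Set ℝ} {f f' f'' g : ℝ → ℝ}

theorem hasDerivWithinAt_Ioi_mul_div (hS : IsOpen S) (hf' : ∀ t ∈ S, HasDerivAt f' (f'' t) t)
    (hf'' : ∀ t ∈ S, f'' t ≠ 0) (hconv : ConvexOn ℝ S fun t => f' t / f'' t) {t : ℝ}
    (ht : t ∈ S) :
    HasDerivWithinAt (fun t => f' t * (f' t / f'' t))
      (f' t * (1 + derivWithin (fun t => f' t / f'' t) (Ioi t) t)) (Ioi t) t := by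
  have hh := hconv.hasDerivWithinAt_rightDeriv_of_mem_interior (hS.interior_eq.symm ▸ ht)
  refine ((hf' t ht).hasDerivWithinAt.mul hh).congr_deriv ?_
  field_simp [hf'' t ht]

theorem le_mul_div_of_convexOn_div (hS : IsOpen S) (hf : ∀ t ∈ S, HasDerivAt f (f' t) t)
    (hf' : ∀ t ∈ S, HasDerivAt f' (f'' t) t) (hf'_nonneg : ∀ t ∈ S, 0 ≤ f' t)
    (hf'' : ∀ t ∈ S, f'' t ≠ 0) (hconv : ConvexOn ℝ S fun t => f' t / f'' t) {w t : ℝ}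
    (hw : w ∈ S) (ht : t ∈ S) :
    f' w * (f' w / f'' w) + (1 + derivWithin (fun t => f' t / f'' t) (Ioi w) w) * (f t - f w)
      ≤ f' t * (f' t / f'' t) := by
  set h := fun t => f' t / f'' t
  set c := derivWithin h (Ioi w) w
  have : S.OrdConnected := hconv.1.ordConnected
  have hmono : MonotoneOn (fun x => derivWithin h (Ioi x) x) S :=
    hS.interior_eq ▸ hconv.monotoneOn_rightDeriv
  have hmin : IsMinOn (fun t => f' t * h t - (1 + c) * f t) S w := by
    refine isMinOn_of_hasDerivWithinAt_Ici (Φ' := fun x => f' x * (derivWithin h (Ioi x) x - c))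
      hw ?_ (fun x hx => ?_) ?_ ?_
    · have hfc : ContinuousOn f S := fun x hx => (hf x hx).continuousAt.continuousWithinAt
      have hf'c : ContinuousOn f' S := fun x hx => (hf' x hx).continuousAt.continuousWithinAt
      exact (hf'c.mul (hconv.continuousOn hS)).sub (continuousOn_const.mul hfc)
    · exact (((hasDerivWithinAt_Ioi_mul_div hS hf' hf'' hconv hx).sub
        (((hf x hx).hasDerivWithinAt).const_mul (1 + c))).congr_deriv (by ring)).Ici_of_Ioi
    · intro x hx hxw
      exact mul_nonpos_of_nonneg_of_nonpos (hf'_nonneg x hx) (sub_nonpos.2 (hmono hx hw hxw.le))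
    · intro x hx hwx
      exact mul_nonneg (hf'_nonneg x hx) (sub_nonneg.2 (hmono hw hx hwx))
  have := hmin ht
  simp only [mem_ofPred_eq] at this
  linarith

theorem two_mul_mul_div_le_of_convexOn_div (hS : IsOpen S) (hf : ∀ t ∈ S, HasDerivAt f (f' t) t)
    (hf' : ∀ t ∈ S, HasDerivAt f' (f'' t) t) (hf'_nonneg : ∀ t ∈ S, 0 ≤ f' t)
    (hf'' : ∀ t ∈ S, f'' t ≠ 0) (hconv : ConvexOn ℝ S fun t => f' t / f'' t) {α β w : ℝ}
    (hα : α ∈ S) (hβ : β ∈ S) (hw : w ∈ S) (hfw : f w = (f α + f β) / 2) :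
    2 * (f' w * (f' w / f'' w)) ≤ f' α * (f' α / f'' α) + f' β * (f' β / f'' β) := by
  have hα' := le_mul_div_of_convexOn_div hS hf hf' hf'_nonneg hf'' hconv hw hα
  have hβ' := le_mul_div_of_convexOn_div hS hf hf' hf'_nonneg hf'' hconv hw hβ
  have : f α - f w + (f β - f w) = 0 := by rw [hfw]; ring
  linear_combination hα' + hβ' - (1 + derivWithin (fun t => f' t / f'' t) (Ioi w) w) * this

theorem add_sq_div_le_two_mul {A B X Y Z : ℝ} (hX : 0 < X) (hY : 0 < Y) (hZ : X + Y ≤ 2 * Z) :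
    (A + B) ^ 2 / Z ≤ 2 * (A ^ 2 / X + B ^ 2 / Y) := by
  have cauchy_schwarz : (A + B) ^ 2 / (X + Y) ≤ A ^ 2 / X + B ^ 2 / Y := by
    rw [div_add_div _ _ hX.ne' hY.ne', div_le_div_iff₀ (by positivity) (by positivity)]
    nlinarith [sq_nonneg (A * Y - B * X)]
  calc (A + B) ^ 2 / Z ≤ (A + B) ^ 2 / ((X + Y) / 2) :=
        div_le_div_of_nonneg_left (sq_nonneg _) (by positivity) (by linarith)
    _ = 2 * ((A + B) ^ 2 / (X + Y)) := by field_simp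
    _ ≤ 2 * (A ^ 2 / X + B ^ 2 / Y) := by linarith

theorem add_sq_mul_sq_le_sq_mul {da db dw ea eb ew p q : ℝ} (ha : da * (da / ea) < 0)
    (hb : db * (db / eb) < 0) (hw : dw * (dw / ew) < 0)
    (h : 2 * (dw * (dw / ew)) ≤ da * (da / ea) + db * (db / eb)) :
    (p ^ 2 * ea + q ^ 2 * eb) / 2 * dw ^ 2 ≤ ((p * da + q * db) / 2) ^ 2 * ew := by
  have hea : ea ≠ 0 := by rintro rfl; simp at ha
  have heb : eb ≠ 0 := by rintro rfl; simp at hb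
  have hew : ew ≠ 0 := by rintro rfl; simp at hw
  have hda : da ≠ 0 := by rintro rfl; simp at ha
  have hdb : db ≠ 0 := by rintro rfl; simp at hb
  have hdw : dw ≠ 0 := by rintro rfl; simp at hw
  have key := add_sq_div_le_two_mul (A := p * da) (B := q * db) (neg_pos.2 ha) (neg_pos.2 hb)
    (Z := -(dw * (dw / ew))) (by linarith)
  calc (p ^ 2 * ea + q ^ 2 * eb) / 2 * dw ^ 2
      = -(dw ^ 2 / 4) *
          (2 * ((p * da) ^ 2 / -(da * (da / ea)) + (q * db) ^ 2 / -(db * (db / eb)))) := by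
        field_simp
        ring
    _ ≤ -(dw ^ 2 / 4) * ((p * da + q * db) ^ 2 / -(dw * (dw / ew))) :=
        mul_le_mul_of_nonpos_left key (by nlinarith [sq_nonneg dw])
    _ = ((p * da + q * db) / 2) ^ 2 * ew := by
        field_simp
        ring

theorem concaveOn_comp_of_leftInvOn {T : Set ℝ} {c c' c'' : ℝ → ℝ} (hS : IsOpen S)
    (hT : Convex ℝ T) (hf : ∀ s ∈ S, HasStrictDerivAt f (f' s) s)
    (hf' : ∀ s ∈ S, HasDerivAt f' (f'' s) s) (hf'_pos : ∀ s ∈ S, 0 < f' s)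
    (hg : LeftInvOn g f S) (hc : ∀ t ∈ T, HasDerivAt c (c' t) t)
    (hc' : ∀ t ∈ T, HasDerivAt c' (c'' t) t) (hcS : ∀ t ∈ T, c t ∈ f '' S)
    (hle : ∀ t ∈ T, c'' t * f' (g (c t)) ^ 2 ≤ c' t ^ 2 * f'' (g (c t))) :
    ConcaveOn ℝ T fun t => g (c t) := by
  have hgc : ∀ t ∈ T, g (c t) ∈ S := by
    intro t ht
    obtain ⟨s, hs, hcs⟩ := hcS t ht
    rwa [← hcs, hg hs]
  have hg' : ∀ t ∈ T, HasDerivAt g (f' (g (c t)))⁻¹ (c t) := by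
    intro t ht
    obtain ⟨s, hs, hcs⟩ := hcS t ht
    rw [← hcs, hg hs]
    exact ((hf s hs).to_local_left_inverse (hf'_pos s hs).ne'
      (eventually_of_mem (hS.mem_nhds hs) fun x hx => hg hx)).hasDerivAt
  have hφ : ∀ t ∈ T, HasDerivAt (fun t => g (c t)) (c' t / f' (g (c t))) t := fun t ht =>
    ((hg' t ht).comp t (hc t ht)).congr_deriv (inv_mul_eq_div _ _)
  have hφ' : ∀ t ∈ T, HasDerivAt (fun t => c' t / f' (g (c t)))
      ((c'' t * f' (g (c t)) - c' t * (f'' (g (c t)) * (c' t / f' (g (c t)))))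
        / f' (g (c t)) ^ 2) t := fun t ht =>
    (hc' t ht).div ((hf' _ (hgc t ht)).comp t (hφ t ht)) (hf'_pos _ (hgc t ht)).ne'
  refine concaveOn_of_hasDerivWithinAt2_nonpos hT
    (fun t ht => (hφ t ht).continuousAt.continuousWithinAt)
    (fun t ht => (hφ t (interior_subset ht)).hasDerivWithinAt)
    (fun t ht => (hφ' t (interior_subset ht)).hasDerivWithinAt) fun t ht => ?_
  replace ht := interior_subset ht
  have hpos := hf'_pos _ (hgc t ht)
  have : c'' t * f' (g (c t)) - c' t * (f'' (g (c t)) * (c' t / f' (g (c t))))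
      = (c'' t * f' (g (c t)) ^ 2 - c' t ^ 2 * f'' (g (c t))) / f' (g (c t)) := by
    field_simp
  rw [this]
  exact div_nonpos_of_nonpos_of_nonneg
    (div_nonpos_of_nonpos_of_nonneg (sub_nonpos.2 (hle t ht)) hpos.le) (sq_nonneg _)

noncomputable def quasiArithmeticMean (f g : ℝ → ℝ) (z : ℝ × ℝ) : ℝ :=
  g ((f z.1 + f z.2) / 2)

theorem quasiArithmeticMean_neg (f g : ℝ → ℝ) :
    quasiArithmeticMean (fun t => -f t) (fun s => g (-s)) = quasiArithmeticMean f g := by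
  ext z
  simp only [quasiArithmeticMean]
  ring_nf

theorem concaveOn_Icc_quasiArithmeticMean_segment (hS : IsOpen S)
    (hf : ∀ s ∈ S, HasStrictDerivAt f (f' s) s) (hf' : ∀ s ∈ S, HasDerivAt f' (f'' s) s)
    (hf'_pos : ∀ s ∈ S, 0 < f' s) (hconv : ConvexOn ℝ S fun t => f' t / f'' t)
    (hneg : ∀ t ∈ S, f' t / f'' t < 0) (hg : LeftInvOn g f S) {x y u v : ℝ} (hx : x ∈ S)
    (hy : y ∈ S) (hu : u ∈ S) (hv : v ∈ S) :
    ConcaveOn ℝ (Icc 0 1) fun t =>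
      quasiArithmeticMean f g (x + t * (u - x), y + t * (v - y)) := by
  have hfd : ∀ s ∈ S, HasDerivAt f (f' s) s := fun s hs => (hf s hs).hasDerivAt
  have hf''_ne : ∀ s ∈ S, f'' s ≠ 0 := fun s hs => (div_ne_zero_iff.1 (hneg s hs).ne).2
  have hseg : ∀ {s s' : ℝ}, s ∈ S → s' ∈ S →
      ∀ t ∈ Icc (0 : ℝ) 1, s + t * (s' - s) ∈ S :=
    fun hs hs' t ht => hconv.1.add_smul_sub_mem hs hs' ht
  have hline : ∀ s p t : ℝ, HasDerivAt (fun t => s + t * p) p t := fun s p t => by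
    simpa using ((hasDerivAt_id t).mul_const p).const_add s
  have hJ : Convex ℝ (f '' S) := (hconv.1.isPreconnected.image f
    fun s hs => (hfd s hs).continuousAt.continuousWithinAt).convex
  have hmid : ∀ t ∈ Icc (0 : ℝ) 1,
      (f (x + t * (u - x)) + f (y + t * (v - y))) / 2 ∈ f '' S := by
    intro t ht
    have := hJ (mem_image_of_mem f (hseg hx hu t ht)) (mem_image_of_mem f (hseg hy hv t ht))
      (by norm_num : (0 : ℝ) ≤ 1 / 2) (by norm_num : (0 : ℝ) ≤ 1 / 2) (by norm_num)
    convert this using 1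
    simp only [smul_eq_mul]
    ring
  refine concaveOn_comp_of_leftInvOn hS (convex_Icc 0 1) hf hf' hf'_pos hg
    (c' := fun t => ((u - x) * f' (x + t * (u - x)) + (v - y) * f' (y + t * (v - y))) / 2)
    (c'' := fun t =>
      ((u - x) ^ 2 * f'' (x + t * (u - x)) + (v - y) ^ 2 * f'' (y + t * (v - y))) / 2)
    (fun t ht => ?_) (fun t ht => ?_) hmid (fun t ht => ?_)
  · exact (((hfd _ (hseg hx hu t ht)).comp t (hline x (u - x) t)).add
      ((hfd _ (hseg hy hv t ht)).comp t (hline y (v - y) t))).div_const 2 |>.congr_deriv (by ring)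
  · exact ((((hf' _ (hseg hx hu t ht)).comp t (hline x (u - x) t)).const_mul (u - x)).add
      (((hf' _ (hseg hy hv t ht)).comp t (hline y (v - y) t)).const_mul (v - y))).div_const 2
      |>.congr_deriv (by ring)
  · obtain ⟨w, hw, hfw⟩ := hmid t ht
    rw [← hfw, hg hw]
    have hX : ∀ s ∈ S, f' s * (f' s / f'' s) < 0 := fun s hs =>
      mul_neg_of_pos_of_neg (hf'_pos s hs) (hneg s hs)
    exact add_sq_mul_sq_le_sq_mul (hX _ (hseg hx hu t ht)) (hX _ (hseg hy hv t ht)) (hX w hw)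
      (two_mul_mul_div_le_of_convexOn_div hS hfd hf' (fun s hs => (hf'_pos s hs).le) hf''_ne
        hconv (hseg hx hu t ht) (hseg hy hv t ht) hw hfw)

theorem concaveOn_quasiArithmeticMean_of_pos (hS : IsOpen S)
    (hf : ∀ s ∈ S, HasStrictDerivAt f (f' s) s) (hf' : ∀ s ∈ S, HasDerivAt f' (f'' s) s)
    (hf'_pos : ∀ s ∈ S, 0 < f' s) (hconv : ConvexOn ℝ S fun t => f' t / f'' t)
    (hneg : ∀ t ∈ S, f' t / f'' t < 0) (hg : LeftInvOn g f S) :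
    ConcaveOn ℝ (S ×ˢ S) (quasiArithmeticMean f g) := by
  refine ⟨hconv.1.prod hconv.1, ?_⟩
  rintro ⟨x, y⟩ ⟨hx, hy⟩ ⟨u, v⟩ ⟨hu, hv⟩ a b ha hb hab
  have := (concaveOn_Icc_quasiArithmeticMean_segment hS hf hf' hf'_pos hconv hneg hg hx hy hu
    hv).2 (left_mem_Icc.2 zero_le_one) (right_mem_Icc.2 zero_le_one) ha hb hab
  obtain rfl : a = 1 - b := by linarith
  simp only [quasiArithmeticMean, Prod.smul_mk, Prod.mk_add_mk, smul_eq_mul] at this ⊢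
  rw [show (1 - b) * x + b * u = x + ((1 - b) * 0 + b * 1) * (u - x) by ring,
    show (1 - b) * y + b * v = y + ((1 - b) * 0 + b * 1) * (v - y) by ring]
  simpa only [zero_mul, one_mul, add_zero, add_sub_cancel] using this

theorem concaveOn_quasiArithmeticMean (hS : IsOpen S)
    (hf : ∀ s ∈ S, HasStrictDerivAt f (f' s) s) (hf' : ∀ s ∈ S, HasDerivAt f' (f'' s) s)
    (hconv : ConvexOn ℝ S fun t => f' t / f'' t) (hneg : ∀ t ∈ S, f' t / f'' t < 0)
    (hg : LeftInvOn g f S) :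
    ConcaveOn ℝ (S ×ˢ S) (quasiArithmeticMean f g) := by
  rcases hasDerivWithinAt_forall_lt_or_forall_gt_of_forall_ne hconv.1
    (fun s hs => (hf s hs).hasDerivAt.hasDerivWithinAt)
    (fun s hs => (div_ne_zero_iff.1 (hneg s hs).ne).1) with hf'_neg | hf'_pos
  · rw [← quasiArithmeticMean_neg]
    refine concaveOn_quasiArithmeticMean_of_pos hS (fun s hs => (hf s hs).neg)
      (fun s hs => (hf' s hs).neg) (fun s hs => neg_pos.2 (hf'_neg s hs)) ?_ ?_ ?_
    · simpa only [neg_div_neg_eq] using hconv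
    · simpa only [neg_div_neg_eq] using hneg
    · intro s hs
      simp only [neg_neg, hg hs]
  · exact concaveOn_quasiArithmeticMean_of_pos hS hf hf' hf'_pos hconv hneg hg

end

theorem quasiArithmetic_two_var_jensenConcave_general
    (a b : ℝ) (f g : ℝ → ℝ)
    (hf : ContDiffOn ℝ 2 f (Ioo a b))
    (hconv : ConvexOn ℝ (Ioo a b) (fun t => deriv f t / deriv (deriv f) t))
    (hneg : ∀ t ∈ Ioo a b, deriv f t / deriv (deriv f) t < 0)
    (hg : Set.InvOn g f (Ioo a b) (f '' Ioo a b)) :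
    ∀ x ∈ Ioo a b, ∀ y ∈ Ioo a b, ∀ u ∈ Ioo a b, ∀ v ∈ Ioo a b,
      (g ((f x + f y) / 2) + g ((f u + f v) / 2)) / 2
        ≤ g ((f ((x + u) / 2) + f ((y + v) / 2)) / 2) := by
  intro x hx y hy u hu v hv
  have hf' : ContDiffOn ℝ 1 (deriv f) (Ioo a b) := hf.deriv_of_isOpen isOpen_Ioo (by norm_num)
  have hconc := concaveOn_quasiArithmeticMean isOpen_Ioo
    (fun s hs => (hf.contDiffAt (isOpen_Ioo.mem_nhds hs)).hasStrictDerivAt (by norm_num))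
    (fun s hs => ((hf'.differentiableOn one_ne_zero).differentiableAt
      (isOpen_Ioo.mem_nhds hs)).hasDerivAt) hconv hneg hg.1
  have := hconc.2 (mk_mem_prod hx hy) (mk_mem_prod hu hv) (by norm_num : (0 : ℝ) ≤ 1 / 2)
    (by norm_num : (0 : ℝ) ≤ 1 / 2) (by norm_num)
  simp only [quasiArithmeticMean, Prod.smul_mk, Prod.mk_add_mk, smul_eq_mul] at this
  rw [show (x + u) / 2 = 1 / 2 * x + 1 / 2 * u by ring,
    show (y + v) / 2 = 1 / 2 * y + 1 / 2 * v by ring]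
  linarith

/-- If `f` is twice continuously differentiable on an open interval `I` with
`f'` and `f''` nowhere zero and `f'/f''` convex and negative on `I`, then the
two-variable equal-weight quasi-arithmetic mean `(x,y) ↦ f⁻¹((f x + f y)/2)`
is Jensen (midpoint) concave on `I²`. -/
theorem quasiArithmetic_two_var_jensenConcave
    (a b : ℝ) (hab : a < b) (f g : ℝ → ℝ)
    (hf : ContDiffOn ℝ 2 f (Ioo a b))
    (hf' : ∀ t ∈ Ioo a b, deriv f t ≠ 0)
    (hf'' : ∀ t ∈ Ioo a b, deriv (deriv f) t ≠ 0)
    (hconv : ConvexOn ℝ (Ioo a b) (fun t => deriv f t / deriv (deriv f) t))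
    (hneg : ∀ t ∈ Ioo a b, deriv f t / deriv (deriv f) t < 0)
    (hg : Set.InvOn g f (Ioo a b) (f '' Ioo a b)) :
    ∀ x ∈ Ioo a b, ∀ y ∈ Ioo a b, ∀ u ∈ Ioo a b, ∀ v ∈ Ioo a b,
      (g ((f x + f y) / 2) + g ((f u + f v) / 2)) / 2
        ≤ g ((f ((x + u) / 2) + f ((y + v) / 2)) / 2) :=
  quasiArithmetic_two_var_jensenConcave_general a b f g hf hconv hneg hg
end

section
/- Let p, q ∈ ℝ with p ≠ q satisfy min(p,q) ≤ 0 ≤ max(p,q) ≤ 1. Then the two-variable equal-weight Gini mean G_{p,q}(x,y) := ((x^p + y^p)/(x^q + y^q))^{1/(p-q)} is concave on (0,∞)². -/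
open Set Real

/-!
With `M_r` the equal-weight power mean of order `r`, one has
`G_{p,q} = M_p ^ (p / (p - q)) * M_q ^ (-q / (p - q))`, and the sign condition makes both
exponents lie in `[0, 1]` (they sum to `1`). For `r ≤ 1`, `M_r(x, y) = x φ(y / x)` is the
perspective of the concave function `φ(t) = ((1 + t ^ r) / 2) ^ (1 / r)`, hence concave; and a
weighted geometric mean of nonnegative concave functions is concave by the two-term Hölder
inequality.
-/

theorem Real.rpow_mul_rpow_add_rpow_mul_rpow_le {α β u v u' v' : ℝ}
    (hα : 0 ≤ α) (hβ : 0 ≤ β) (hαβ : α + β = 1)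
    (hu : 0 ≤ u) (hv : 0 ≤ v) (hu' : 0 ≤ u') (hv' : 0 ≤ v') :
    u ^ α * v ^ β + u' ^ α * v' ^ β ≤ (u + u') ^ α * (v + v') ^ β := by
  obtain rfl | hα0 := hα.eq_or_lt
  · simp [show β = 1 by linarith]
  obtain rfl | hβ0 := hβ.eq_or_lt
  · simp [show α = 1 by linarith]
  obtain hU | hU := (add_nonneg hu hu').eq_or_lt
  · obtain ⟨rfl, rfl⟩ : u = 0 ∧ u' = 0 := ⟨by linarith, by linarith⟩
    simp [zero_rpow hα0.ne']
  obtain hV | hV := (add_nonneg hv hv').eq_or_lt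
  · obtain ⟨rfl, rfl⟩ : v = 0 ∧ v' = 0 := ⟨by linarith, by linarith⟩
    simp [zero_rpow hβ0.ne']
  -- weighted AM-GM for the pair `(a, b)` normalised by `(u + u', v + v')`
  have amgm {a b : ℝ} (ha : 0 ≤ a) (hb : 0 ≤ b) :
      a ^ α * b ^ β ≤
        (u + u') ^ α * (v + v') ^ β * (α * (a / (u + u')) + β * (b / (v + v'))) := by
    have := geom_mean_le_arith_mean2_weighted hα hβ
      (div_nonneg ha hU.le) (div_nonneg hb hV.le) hαβ
    rw [div_rpow ha hU.le, div_rpow hb hV.le, div_mul_div_comm,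
      div_le_iff₀ (by positivity)] at this
    linarith
  calc u ^ α * v ^ β + u' ^ α * v' ^ β
      ≤ (u + u') ^ α * (v + v') ^ β * (α * (u / (u + u')) + β * (v / (v + v')))
        + (u + u') ^ α * (v + v') ^ β * (α * (u' / (u + u')) + β * (v' / (v + v'))) :=
        add_le_add (amgm hu hv) (amgm hu' hv')
    _ = (u + u') ^ α * (v + v') ^ β := by
        field_simp
        linear_combination (v + v') * (u + u') * hαβ

theorem ConcaveOn.rpow_mul_rpow {E : Type*} [AddCommMonoid E] [Module ℝ E] {s : Set E}
    {f g : E → ℝ} (hf : ConcaveOn ℝ s f) (hg : ConcaveOn ℝ s g)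
    (hf₀ : ∀ x ∈ s, 0 ≤ f x) (hg₀ : ∀ x ∈ s, 0 ≤ g x)
    {α β : ℝ} (hα : 0 ≤ α) (hβ : 0 ≤ β) (hαβ : α + β = 1) :
    ConcaveOn ℝ s (fun x => f x ^ α * g x ^ β) := by
  refine ⟨hf.1, fun x hx y hy a b ha hb hab => ?_⟩
  have absorb {c F G : ℝ} (hc : 0 ≤ c) (hF : 0 ≤ F) (hG : 0 ≤ G) :
      c * (F ^ α * G ^ β) = (c * F) ^ α * (c * G) ^ β := by
    have hsplit : c ^ α * c ^ β = c := by
      rw [← rpow_add' hc (by simp [hαβ]), hαβ, rpow_one]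
    rw [mul_rpow hc hF, mul_rpow hc hG]
    linear_combination -(F ^ α * G ^ β) * hsplit
  have hfx := hf₀ x hx
  have hfy := hf₀ y hy
  have hgx := hg₀ x hx
  have hgy := hg₀ y hy
  have hfxy := hf.2 hx hy ha hb hab
  have hgxy := hg.2 hx hy ha hb hab
  simp only [smul_eq_mul] at hfxy hgxy ⊢
  calc a * (f x ^ α * g x ^ β) + b * (f y ^ α * g y ^ β)
      = (a * f x) ^ α * (a * g x) ^ β + (b * f y) ^ α * (b * g y) ^ β := by
        rw [absorb ha hfx hgx, absorb hb hfy hgy]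
    _ ≤ (a * f x + b * f y) ^ α * (a * g x + b * g y) ^ β :=
        rpow_mul_rpow_add_rpow_mul_rpow_le hα hβ hαβ (by positivity) (by positivity)
          (by positivity) (by positivity)
    _ ≤ f (a • x + b • y) ^ α * g (a • x + b • y) ^ β := by
        have := hf₀ _ (hf.1 hx hy ha hb hab)
        gcongr

theorem ConcaveOn.perspective {φ : ℝ → ℝ} (hφ : ConcaveOn ℝ (Ioi 0) φ) :
    ConcaveOn ℝ (Ioi 0 ×ˢ Ioi 0) (fun z : ℝ × ℝ => z.1 * φ (z.2 / z.1)) := by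
  refine ⟨(convex_Ioi 0).prod (convex_Ioi 0), ?_⟩
  rintro ⟨x₁, y₁⟩ ⟨hx₁ : 0 < x₁, hy₁ : 0 < y₁⟩ ⟨x₂, y₂⟩ ⟨hx₂ : 0 < x₂, hy₂ : 0 < y₂⟩
    a b ha hb hab
  simp only [Prod.smul_mk, Prod.mk_add_mk, smul_eq_mul]
  have hx : 0 < a * x₁ + b * x₂ := by
    rcases ha.eq_or_lt with rfl | ha'
    · simp_all
    · positivity
  have key := hφ.2 (div_pos hy₁ hx₁) (div_pos hy₂ hx₂)
    (by positivity : 0 ≤ a * x₁ / (a * x₁ + b * x₂))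
    (by positivity : 0 ≤ b * x₂ / (a * x₁ + b * x₂))
    (by field_simp)
  simp only [smul_eq_mul] at key
  calc a * (x₁ * φ (y₁ / x₁)) + b * (x₂ * φ (y₂ / x₂))
      = (a * x₁ + b * x₂) * (a * x₁ / (a * x₁ + b * x₂) * φ (y₁ / x₁)
          + b * x₂ / (a * x₁ + b * x₂) * φ (y₂ / x₂)) := by field_simp
    _ ≤ (a * x₁ + b * x₂) * φ (a * x₁ / (a * x₁ + b * x₂) * (y₁ / x₁)
          + b * x₂ / (a * x₁ + b * x₂) * (y₂ / x₂)) := by gcongr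
    _ = (a * x₁ + b * x₂) * φ ((a * y₁ + b * y₂) / (a * x₁ + b * x₂)) := by
        congr 2; field_simp

theorem hasDerivAt_one_add_rpow_rpow_inv {r t : ℝ} (hr : r ≠ 0) (ht : 0 < t) :
    HasDerivAt (fun t : ℝ => (1 + t ^ r) ^ (1 / r)) ((1 + t ^ (-r)) ^ (1 / r - 1)) t := by
  have hS : 0 < 1 + t ^ r := by positivity
  have hchain := (hasDerivAt_rpow_const (p := 1 / r) (Or.inl hS.ne')).comp t
    ((hasDerivAt_rpow_const (p := r) (Or.inl ht.ne')).const_add 1)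
  refine hchain.congr_deriv ?_
  have hbase : 1 + t ^ (-r) = (1 + t ^ r) * t ^ (-r) := by
    rw [add_mul, one_mul, ← rpow_add ht, add_neg_cancel, rpow_zero, add_comm]
  rw [hbase, mul_rpow hS.le (rpow_nonneg ht.le _), ← rpow_mul ht.le,
    show -r * (1 / r - 1) = r - 1 by field_simp; ring]
  field_simp

theorem concaveOn_one_add_rpow_rpow_inv {r : ℝ} (hr₀ : r ≠ 0) (hr₁ : r ≤ 1) :
    ConcaveOn ℝ (Ioi 0) (fun t : ℝ => (1 + t ^ r) ^ (1 / r)) := by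
  have hderiv {t : ℝ} (ht : t ∈ Ioi 0) := hasDerivAt_one_add_rpow_rpow_inv hr₀ ht
  refine AntitoneOn.concaveOn_of_deriv (convex_Ioi 0)
    (fun t ht => (hderiv ht).continuousAt.continuousWithinAt)
    (by
      rw [interior_Ioi]
      exact fun t ht => (hderiv ht).differentiableAt.differentiableWithinAt) ?_
  rw [interior_Ioi]
  intro s (hs : 0 < s) t (ht : 0 < t) hst
  rw [(hderiv hs).deriv, (hderiv ht).deriv]
  rcases hr₀.lt_or_gt with hr | hr
  · have hbase : 1 + s ^ (-r) ≤ 1 + t ^ (-r) := by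
      gcongr; linarith
    exact rpow_le_rpow_of_nonpos (by positivity) hbase (by linarith [one_div_neg.2 hr])
  · have hbase : 1 + t ^ (-r) ≤ 1 + s ^ (-r) := by
      gcongr (1 + ?_)
      exact rpow_le_rpow_of_nonpos hs hst (by linarith)
    exact rpow_le_rpow (by positivity) hbase (by rw [sub_nonneg, le_div_iff₀ hr]; linarith)

/-- The equal-weight power mean of order `r`. For `r = 0` it is the constant `1`, since
`1 / 0 = 0`; it only enters below raised to the power `0`, where this is harmless. -/
noncomputable def powerMean (r : ℝ) (z : ℝ × ℝ) : ℝ := ((z.1 ^ r + z.2 ^ r) / 2) ^ (1 / r)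

theorem powerMean_nonneg (r : ℝ) {z : ℝ × ℝ} (hx : 0 ≤ z.1) (hy : 0 ≤ z.2) :
    0 ≤ powerMean r z := by
  unfold powerMean
  positivity

theorem concaveOn_powerMean {r : ℝ} (hr : r ≤ 1) :
    ConcaveOn ℝ (Ioi 0 ×ˢ Ioi 0) (powerMean r) := by
  rcases eq_or_ne r 0 with rfl | hr₀
  · have hconst : powerMean 0 = fun _ => 1 := by ext; simp [powerMean]
    exact hconst ▸ concaveOn_const (𝕜 := ℝ) 1 ((convex_Ioi 0).prod (convex_Ioi 0))
  refine ((concaveOn_one_add_rpow_rpow_inv hr₀ hr).perspective.smul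
    (rpow_nonneg (by norm_num : (0 : ℝ) ≤ 2) (-(1 / r)))).congr ?_
  rintro ⟨x, y⟩ ⟨hx : 0 < x, hy : 0 < y⟩
  have hxr : 0 < x ^ r := rpow_pos_of_pos hx r
  simp only [powerMean, smul_eq_mul]
  rw [div_rpow hy.le hx.le, show 1 + y ^ r / x ^ r = (x ^ r + y ^ r) / x ^ r by field_simp,
    div_rpow (by positivity) hxr.le, ← rpow_mul hx.le, mul_one_div_cancel hr₀, rpow_one,
    div_rpow (by positivity) zero_le_two, rpow_neg zero_le_two]
  field_simp

theorem powerMean_rpow_mul (r c : ℝ) {z : ℝ × ℝ} (hx : 0 ≤ z.1) (hy : 0 ≤ z.2) :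
    powerMean r z ^ (r * c) = ((z.1 ^ r + z.2 ^ r) / 2) ^ c := by
  rcases eq_or_ne r 0 with rfl | hr₀
  · simp
  rw [powerMean, ← rpow_mul (by positivity), show 1 / r * (r * c) = c by field_simp]

theorem gini_eq_powerMean_rpow_mul_powerMean_rpow {p q : ℝ} {z : ℝ × ℝ}
    (hx : 0 ≤ z.1) (hy : 0 ≤ z.2) :
    ((z.1 ^ p + z.2 ^ p) / (z.1 ^ q + z.2 ^ q)) ^ (1 / (p - q))
      = powerMean p z ^ (p / (p - q)) * powerMean q z ^ (-q / (p - q)) := by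
  rw [div_eq_mul_one_div p, div_eq_mul_one_div (-q), neg_mul_comm, powerMean_rpow_mul p _ hx hy,
    powerMean_rpow_mul q _ hx hy, rpow_neg (by positivity), ← div_eq_mul_inv,
    ← div_rpow (by positivity) (by positivity), div_div_div_cancel_right₀ two_ne_zero]

/-- If `min(p,q) ≤ 0 ≤ max(p,q) ≤ 1` with `p ≠ q`, then the two-variable
equal-weight Gini mean `G_{p,q}(x,y) = ((x^p+y^p)/(x^q+y^q))^{1/(p-q)}`
is concave on `(0,∞)²`. -/
theorem gini_two_var_concave
    (p q : ℝ) (hpq : p ≠ q) (h₁ : min p q ≤ 0) (h₂ : 0 ≤ max p q) (h₃ : max p q ≤ 1) :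
    ConcaveOn ℝ (Ioi (0 : ℝ) ×ˢ Ioi (0 : ℝ))
      (fun z : ℝ × ℝ => ((z.1 ^ p + z.2 ^ p) / (z.1 ^ q + z.2 ^ q)) ^ (1 / (p - q))) := by
  have hp : p ≤ 1 := (le_max_left p q).trans h₃
  have hq : q ≤ 1 := (le_max_right p q).trans h₃
  obtain ⟨hα, hβ⟩ : 0 ≤ p / (p - q) ∧ 0 ≤ -q / (p - q) := by
    rcases hpq.lt_or_gt with h | h
    · rw [min_eq_left h.le] at h₁
      rw [max_eq_right h.le] at h₂
      exact ⟨div_nonneg_of_nonpos h₁ (by linarith),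
        div_nonneg_of_nonpos (by linarith) (by linarith)⟩
    · rw [min_eq_right h.le] at h₁
      rw [max_eq_left h.le] at h₂
      exact ⟨div_nonneg h₂ (by linarith), div_nonneg (by linarith) (by linarith)⟩
  have hαβ : p / (p - q) + -q / (p - q) = 1 := by
    rw [← add_div, ← sub_eq_add_neg, div_self (sub_ne_zero.2 hpq)]
  exact ((concaveOn_powerMean hp).rpow_mul_rpow (concaveOn_powerMean hq)
    (fun _ hz ↦ powerMean_nonneg p (le_of_lt hz.1) (le_of_lt hz.2))
    (fun _ hz ↦ powerMean_nonneg q (le_of_lt hz.1) (le_of_lt hz.2)) hα hβ hαβ).congr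
    fun _ hz ↦ (gini_eq_powerMean_rpow_mul_powerMean_rpow (le_of_lt hz.1) (le_of_lt hz.2)).symm
end

section
/- Let λ ∈ ℝ^n with λ_1 > 0 and λ_i ≥ 0, n ≥ 2, and let M : ⋃_{m=1}^n [0,∞)^m × W_m(ℝ) → [0,∞) be homogeneous in the entries and satisfy: (i) M((0,...,0,1),(λ_1,...,λ_{n-1})) = 1 and M((0,...,0,1),λ) = 1; (ii) x ↦ μ(x) := M((0,...,0,x,1),λ) is differentiable at 0 with μ'(0) < 0. If M satisfies the reversed (n,λ)-weighted Kedlaya inequality A(M-partial-means) ≥ M(A-partial-means) for all x ∈ [0,∞)^n, then λ_{n-1}/(λ_1+...+λ_{n-1}) ≥ λ_n/(λ_1+...+λ_n). -/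
/-!
Test the inequality on `x = (0,…,0,t,1)`, `t > 0`. The partial averages are
`(0,…,0, λ_{n-1}t/Λ_{n-1}, A(t))` with `A(t) = (λ_{n-1}t + λ_n)/Λ_n`, and by homogeneity and (i) the
partial means are `0,…,0, t, μ(t)`. Pulling `A(t)` out of the left side, the inequality becomes
`A(t) μ(λ_{n-1}t/(Λ_{n-1}A(t))) ≤ (λ_{n-1}t + λ_n μ(t))/Λ_n`. Both sides equal `λ_n/Λ_n` at `t = 0`,
so their derivatives at `0` compare: `μ'(0) (λ_n/Λ_n - λ_{n-1}/Λ_{n-1}) ≥ 0`, and `μ'(0) < 0`.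
-/

open Finset Filter

theorem HasDerivAt.nonneg_of_forall_lt_le {F : ℝ → ℝ} {D a : ℝ} (hF : HasDerivAt F D a)
    (h : ∀ t, a < t → F a ≤ F t) : 0 ≤ D := by
  refine ge_of_tendsto ((hasDerivAt_iff_tendsto_slope.mp hF).mono_left
    (nhdsWithin_mono (s := Set.Ioi a) a fun t ht => ne_of_gt ht)) ?_
  filter_upwards [self_mem_nhdsWithin] with t ht
  rw [slope_def_field]
  exact div_nonneg (sub_nonneg.mpr (h t ht)) (sub_nonneg.mpr ht.le)

theorem div_le_div_of_two_point_inequality {μ : ℝ → ℝ} {a b P Q d : ℝ} (hP : 0 < P)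
    (hQ : 0 < Q) (hb : 0 < b) (hμ0 : μ 0 = 1) (hμ : HasDerivAt μ d 0) (hd : d < 0)
    (h : ∀ t, 0 < t →
      (a * t + b) / Q * μ (a * t / P / ((a * t + b) / Q)) ≤ (a * t + b * μ t) / Q) :
    b / Q ≤ a / P := by
  set s : ℝ → ℝ := fun t => a * t / P / ((a * t + b) / Q) with hs_def
  have hs0 : s 0 = 0 := by simp [hs_def]
  have hs : HasDerivAt s (a / P / (b / Q)) 0 := by
    refine ((((hasDerivAt_id' 0).const_mul a).div_const P).div
      ((((hasDerivAt_id' 0).const_mul a).add_const b).div_const Q)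
      (by simp only [mul_zero, zero_add]; positivity)).congr_deriv ?_
    simp only [mul_zero, zero_add, zero_div, zero_mul, sub_zero]
    field_simp
  have hF : HasDerivAt (fun t => (a * t + b * μ t) / Q - (a * t + b) / Q * μ (s t))
      (d * (b / Q - a / P)) 0 := by
    refine (((((hasDerivAt_id' 0).const_mul a).add (hμ.const_mul b)).div_const Q).sub
      ((((hasDerivAt_id' 0).const_mul a).add_const b).div_const Q |>.mul
        ((hs0 ▸ hμ).comp 0 hs))).congr_deriv ?_
    simp only [hs0, hμ0]
    field_simp
    ring
  have hD := hF.nonneg_of_forall_lt_le fun t ht => by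
    simpa [hs0, hμ0] using h t ht
  nlinarith

theorem sum_univ_fin_succ_eq_sum_Icc {M : Type*} [AddCommMonoid M] (k : ℕ) (f : ℕ → M) :
    ∑ i : Fin k, f (i + 1) = ∑ i ∈ Icc 1 k, f i := by
  rw [Fin.sum_univ_eq_sum_range (fun i => f (i + 1)), range_eq_Ico, sum_Ico_add']
  rfl

def IsPosHomogeneous {ι : Type*} (g : (ι → ℝ) → ℝ) : Prop :=
  ∀ x : ι → ℝ, (∀ i, 0 ≤ x i) → ∀ t : ℝ, 0 < t → g (fun i => t * x i) = t * g x

theorem IsPosHomogeneous.map_zero {ι : Type*} {g : (ι → ℝ) → ℝ} (hg : IsPosHomogeneous g) :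
    g (fun _ => 0) = 0 := by
  have h := hg (fun _ => 0) (fun _ => le_rfl) 2 two_pos
  simp only [mul_zero] at h
  linarith

def twoSpike (m : ℕ) (u v : ℝ) (j : ℕ) : ℝ :=
  if j = m then u else if j = m + 1 then v else 0

section twoSpike

variable {m j : ℕ} {u v : ℝ}

theorem twoSpike_nonneg (hu : 0 ≤ u) (hv : 0 ≤ v) (j : ℕ) : 0 ≤ twoSpike m u v j := by
  unfold twoSpike; split_ifs <;> first | assumption | exact le_rfl

theorem twoSpike_succ : twoSpike (m + 1) u v (j + 1) = twoSpike m u v j := by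
  simp [twoSpike]

theorem twoSpike_of_lt (h : j < m) : twoSpike m u v j = 0 := by
  simp [twoSpike, h.ne, (h.trans (Nat.lt_succ_self m)).ne]

theorem twoSpike_eq_add :
    twoSpike m u v j = (if j = m then u else 0) + (if j = m + 1 then v else 0) := by
  unfold twoSpike; split_ifs <;> simp_all

theorem twoSpike_zero_left : twoSpike m 0 v j = if j = m + 1 then v else 0 := by
  unfold twoSpike; split_ifs <;> first | rfl | omega

theorem twoSpike_of_lt_succ (h : j < m + 1) : twoSpike m u v j = if j = m then u else 0 := by
  simp [twoSpike, h.ne]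

theorem twoSpike_eq_mul (hv : v ≠ 0) : twoSpike m u v j = v * twoSpike m (u / v) 1 j := by
  simp only [twoSpike, mul_ite, mul_div_cancel₀ u hv, mul_one, mul_zero]

end twoSpike

theorem sum_mul_twoSpike (lam : ℕ → ℝ) (s : Finset ℕ) (m : ℕ) (u v : ℝ) :
    ∑ j ∈ s, lam j * twoSpike m u v j =
      (if m ∈ s then lam m * u else 0) + (if m + 1 ∈ s then lam (m + 1) * v else 0) := by
  simp only [twoSpike_eq_add, mul_add, mul_ite, mul_zero, sum_add_distrib, sum_ite_eq']

theorem partialAverages_twoSpike (lam L : ℕ → ℝ) (m : ℕ) (t : ℝ) :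
    (fun k : Fin (m + 2) =>
        (∑ j ∈ Icc 1 ((k : ℕ) + 1), lam j * twoSpike (m + 1) t 1 j) / L ((k : ℕ) + 1)) =
      fun k : Fin (m + 2) => twoSpike m (lam (m + 1) * t / L (m + 1))
        ((lam (m + 1) * t + lam (m + 2)) / L (m + 2)) k := by
  ext ⟨k, hk⟩
  simp only [sum_mul_twoSpike, mem_Icc, mul_one]
  rcases Nat.lt_or_ge k m with hkm | hkm
  · rw [twoSpike_of_lt hkm, if_neg (by omega), if_neg (by omega), add_zero, zero_div]
  · obtain rfl | rfl : k = m ∨ k = m + 1 := by omega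
    · simp [twoSpike]
    · simp [twoSpike]

theorem IsPosHomogeneous.apply_twoSpike {k : ℕ} {g : (Fin k → ℝ) → ℝ} (hg : IsPosHomogeneous g)
    (m : ℕ) {u v : ℝ} (hu : 0 ≤ u) (hv : 0 < v) :
    g (fun i => twoSpike m u v i) = v * g (fun i => twoSpike m (u / v) 1 i) := by
  simp_rw [twoSpike_eq_mul hv.ne' (u := u)]
  exact hg _ (fun i => twoSpike_nonneg (by positivity) zero_le_one i) v hv

theorem sum_mul_partialMeans_twoSpike (lam : ℕ → ℝ)
    (M : (k : ℕ) → (Fin k → ℝ) → (Fin k → ℝ) → ℝ) (m : ℕ) {t : ℝ} (ht : 0 < t)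
    (hM : ∀ k ∈ Icc 1 (m + 1), IsPosHomogeneous fun x => M k x fun i => lam (i + 1))
    (hunit : M (m + 1) (fun i => if (i : ℕ) = m then 1 else 0) (fun i => lam (i + 1)) = 1) :
    ∑ k ∈ Icc 1 (m + 2), lam k * M k (fun i : Fin k => twoSpike (m + 1) t 1 (i + 1))
        (fun i => lam (i + 1)) =
      lam (m + 1) * t +
        lam (m + 2) * M (m + 2) (fun i => twoSpike m t 1 i) (fun i => lam (i + 1)) := by
  simp only [twoSpike_succ]
  rw [sum_Icc_succ_top (by omega), sum_Icc_succ_top (by omega), sum_eq_zero, zero_add]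
  · have hspike : (fun i : Fin (m + 1) => twoSpike m t 1 i) =
        fun i : Fin (m + 1) => t * if (i : ℕ) = m then 1 else 0 := by
      ext i
      rw [twoSpike_of_lt_succ i.isLt, mul_ite, mul_one, mul_zero]
    have hlin : M (m + 1) (fun i => twoSpike m t 1 i) (fun i => lam (i + 1)) = t := by
      rw [hspike]
      exact (hM (m + 1) (by simp) _ (fun i => by positivity) t ht).trans
        (by beta_reduce; rw [hunit, mul_one])
    rw [hlin]
  · intro k hk
    have hzero : (fun i : Fin k => twoSpike m t 1 i) = fun _ => 0 := by
      ext ⟨i, hi⟩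
      exact twoSpike_of_lt (by simp at hk; omega)
    rw [hzero, (hM k (by simp at hk ⊢; omega)).map_zero, mul_zero]

theorem reversed_kedlaya_necessary_condition_general
    (n : ℕ) (hn : 2 ≤ n) (lam : ℕ → ℝ)
    (hlam1 : 0 < lam 1) (hlam : ∀ i ∈ Icc 1 n, 0 ≤ lam i)
    (L : ℕ → ℝ) (hL : ∀ k, L k = ∑ i ∈ Icc 1 k, lam i)
    (M : (m : ℕ) → (Fin m → ℝ) → (Fin m → ℝ) → ℝ)
    -- homogeneity in the entries
    (hhom : ∀ (m : ℕ) (x w : Fin m → ℝ) (t : ℝ), 1 ≤ m → m ≤ n → 0 < t →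
      (∀ i, 0 ≤ x i) → (∀ i, 0 ≤ w i) → 0 < ∑ i, w i →
      M m (fun i => t * x i) w = t * M m x w)
    -- property (i)
    (hi₁ : M (n - 1) (fun i => if (i : ℕ) = n - 2 then 1 else 0)
      (fun i => lam ((i : ℕ) + 1)) = 1)
    (hi₂ : M n (fun i => if (i : ℕ) = n - 1 then 1 else 0)
      (fun i => lam ((i : ℕ) + 1)) = 1)
    -- property (ii): μ is differentiable at 0 with μ'(0) < 0
    (hii : ∃ d : ℝ, d < 0 ∧ HasDerivAt
      (fun x : ℝ => M n
        (fun i => if (i : ℕ) = n - 2 then x else if (i : ℕ) = n - 1 then 1 else 0)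
        (fun i => lam ((i : ℕ) + 1))) d 0)
    -- reversed (n,λ)-weighted Kedlaya inequality
    (hked : ∀ x : ℕ → ℝ, (∀ i ∈ Icc 1 n, 0 ≤ x i) →
      M n (fun k : Fin n => (∑ j ∈ Icc 1 ((k : ℕ) + 1), lam j * x j) / L ((k : ℕ) + 1))
          (fun i => lam ((i : ℕ) + 1))
        ≤ (∑ k ∈ Icc 1 n, lam k *
            M k (fun i : Fin k => x ((i : ℕ) + 1)) (fun i : Fin k => lam ((i : ℕ) + 1)))
            / L n) :
    lam n / L n ≤ lam (n - 1) / L (n - 1) := by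
  obtain ⟨m, rfl⟩ : ∃ m, n = m + 2 := ⟨n - 2, by omega⟩
  have hLpos : ∀ k ∈ Icc 1 (m + 2), 0 < L k := fun k hk => by
    rw [hL]
    exact sum_pos' (fun i hi => hlam i (Icc_subset_Icc_right (mem_Icc.mp hk).2 hi))
      ⟨1, by simp [(mem_Icc.mp hk).1], hlam1⟩
  have hM : ∀ k ∈ Icc 1 (m + 2), IsPosHomogeneous fun x => M k x fun i => lam (i + 1) := by
    intro k hk x hx t ht
    obtain ⟨hk1, hk2⟩ := mem_Icc.mp hk
    refine hhom k x _ t hk1 hk2 ht hx (fun i => hlam _ (mem_Icc.mpr ⟨by omega, by omega⟩)) ?_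
    rw [sum_univ_fin_succ_eq_sum_Icc, ← hL]
    exact hLpos k hk
  rcases (hlam (m + 2) (by simp)).eq_or_lt with hb | hb
  · rw [← hb, zero_div]
    exact div_nonneg (hlam _ (by simp)) (hLpos _ (by simp)).le
  have ha : 0 ≤ lam (m + 1) := hlam _ (by simp)
  have hP : 0 < L (m + 1) := hLpos _ (by simp)
  have hQ : 0 < L (m + 2) := hLpos _ (by simp)
  obtain ⟨d, hd, hμ⟩ := hii
  refine div_le_div_of_two_point_inequality hP hQ hb ?_ hμ hd fun t ht => ?_
  · show M (m + 2) (fun i => twoSpike m 0 1 i) _ = 1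
    simp_rw [twoSpike_zero_left]
    exact hi₂
  · have key := hked (twoSpike (m + 1) t 1) fun i _ => twoSpike_nonneg ht.le zero_le_one i
    rwa [partialAverages_twoSpike,
      (hM _ (by simp)).apply_twoSpike m (by positivity) (by positivity),
      sum_mul_partialMeans_twoSpike lam M m ht
        (fun k hk => hM k (Icc_subset_Icc_right (by omega) hk)) hi₁] at key

/-- Necessity of the monotone-ratio condition: if a homogeneous weighted mean
`M` on `[0,∞)` normalizes the unit vectors as in (i), has the differentiability
property (ii) with negative derivative, and satisfies the reversed
`(n,λ)`-weighted Kedlaya inequality, then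
`λ_{n-1}/Λ_{n-1} ≥ λ_n/Λ_n`. -/
theorem reversed_kedlaya_necessary_condition
    (n : ℕ) (hn : 2 ≤ n) (lam : ℕ → ℝ)
    (hlam1 : 0 < lam 1) (hlam : ∀ i ∈ Icc 1 n, 0 ≤ lam i)
    (L : ℕ → ℝ) (hL : ∀ k, L k = ∑ i ∈ Icc 1 k, lam i)
    (M : (m : ℕ) → (Fin m → ℝ) → (Fin m → ℝ) → ℝ)
    -- M takes nonnegative values
    (hpos : ∀ (m : ℕ) (x w : Fin m → ℝ), 1 ≤ m → m ≤ n → (∀ i, 0 ≤ x i) →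
      (∀ i, 0 ≤ w i) → 0 < ∑ i, w i → 0 ≤ M m x w)
    -- homogeneity in the entries
    (hhom : ∀ (m : ℕ) (x w : Fin m → ℝ) (t : ℝ), 1 ≤ m → m ≤ n → 0 < t →
      (∀ i, 0 ≤ x i) → (∀ i, 0 ≤ w i) → 0 < ∑ i, w i →
      M m (fun i => t * x i) w = t * M m x w)
    -- property (i)
    (hi₁ : M (n - 1) (fun i => if (i : ℕ) = n - 2 then 1 else 0)
      (fun i => lam ((i : ℕ) + 1)) = 1)
    (hi₂ : M n (fun i => if (i : ℕ) = n - 1 then 1 else 0)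
      (fun i => lam ((i : ℕ) + 1)) = 1)
    -- property (ii): μ is differentiable at 0 with μ'(0) < 0
    (hii : ∃ d : ℝ, d < 0 ∧ HasDerivAt
      (fun x : ℝ => M n
        (fun i => if (i : ℕ) = n - 2 then x else if (i : ℕ) = n - 1 then 1 else 0)
        (fun i => lam ((i : ℕ) + 1))) d 0)
    -- reversed (n,λ)-weighted Kedlaya inequality
    (hked : ∀ x : ℕ → ℝ, (∀ i ∈ Icc 1 n, 0 ≤ x i) →
      M n (fun k : Fin n => (∑ j ∈ Icc 1 ((k : ℕ) + 1), lam j * x j) / L ((k : ℕ) + 1))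
          (fun i => lam ((i : ℕ) + 1))
        ≤ (∑ k ∈ Icc 1 n, lam k *
            M k (fun i : Fin k => x ((i : ℕ) + 1)) (fun i : Fin k => lam ((i : ℕ) + 1)))
            / L n) :
    lam n / L n ≤ lam (n - 1) / L (n - 1) :=
  reversed_kedlaya_necessary_condition_general n hn lam hlam1 hlam L hL M hhom hi₁ hi₂ hii hked
end
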